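/- For every natural number k and every GLP formula φ, GLP proves ⟨α+1⟩φ → ⟨α⟩Q^k_α(φ). -/

import Mathlib

/-- Formulas of polymodal provability logic GLP with ordinal-indexed modalities. -/
inductive GLPFormula : Type 1 where
  | bot : GLPFormula
  | var : ℕ → GLPFormula
  | imp : GLPFormula → GLPFormula → GLPFormula
  | and : GLPFormula → GLPFormula → GLPFormula
  | box : Ordinal → GLPFormula → GLPFormula

namespace GLPFormula

def neg (A : GLPFormula) : GLPFormula := imp A bot
def top : GLPFormula := neg bot
def dia (α : Ordinal) (A : GLPFormula) : GLPFormula := neg (box α (neg A))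
def iff (A B : GLPFormula) : GLPFormula := and (imp A B) (imp B A)

/-- A formula is a propositional tautology if every boolean valuation commuting with
the propositional connectives (and arbitrary on boxes and variables) makes it true. -/
def IsTaut (A : GLPFormula) : Prop :=
  ∀ v : GLPFormula → Bool, v bot = false →
    (∀ B C, v (imp B C) = (!v B || v C)) →
    (∀ B C, v (and B C) = (v B && v C)) →
    v A = true

/-- Hilbert-style provability in GLP. -/
inductive Proof : GLPFormula → Prop where
  | taut {A} : IsTaut A → Proof A
  | k {α A B} : Proof ((box α (A.imp B)).imp ((box α A).imp (box α B)))
  | lob {α A} : Proof ((box α ((box α A).imp A)).imp (box α A))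
  | mono {α β A} : α ≤ β → Proof ((box α A).imp (box β A))
  | negIntro {α β A} : α < β → Proof ((dia α A).imp (box β (dia α A)))
  | mp {A B} : Proof (A.imp B) → Proof A → Proof B
  | nec {α A} : Proof A → Proof (box α A)

/-- Q^0_α(φ) = ⟨α⟩φ, Q^{k+1}_α(φ) = ⟨α⟩(φ ∧ Q^k_α(φ)). -/
def Q (α : Ordinal) (φ : GLPFormula) : ℕ → GLPFormula
  | 0 => dia α φ
  | k + 1 => dia α (φ.and (Q α φ k))

end GLPFormula

open GLPFormula

/-!
Every `Q^k_α(φ)` is a `⟨α⟩`-formula, hence provably implies its own `[α+1]`-necessitation.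
By induction on `k`, `⟨α+1⟩φ` implies `Q^k_α(φ)`: from `⟨α+1⟩φ` we get `[α+1]Q^k_α(φ)`, which together
with `⟨α+1⟩φ` yields `⟨α+1⟩(φ ∧ Q^k_α(φ))` and so, by monotonicity, `⟨α⟩(φ ∧ Q^k_α(φ)) = Q^{k+1}_α(φ)`.
Weakening the conjunction inside `Q^{k+1}_α(φ)` gives `⟨α⟩Q^k_α(φ)`.
-/

namespace GLPFormula.Proof

variable {α β : Ordinal} {A B C : GLPFormula}

theorem imp_trans (hAB : Proof (A.imp B)) (hBC : Proof (B.imp C)) : Proof (A.imp C) :=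
  mp (mp (taut fun v _ hi _ => by
    simp only [hi]; cases v A <;> cases v B <;> cases v C <;> rfl) hAB) hBC

theorem imp_of_imp_imp (h : Proof (A.imp (A.imp B))) : Proof (A.imp B) :=
  mp (taut fun v _ hi _ => by simp only [hi]; cases v A <;> cases v B <;> rfl) h

theorem neg_imp_neg (h : Proof (A.imp B)) : Proof ((neg B).imp (neg A)) :=
  mp (taut fun v h0 hi _ => by simp only [neg, hi, h0]; cases v A <;> cases v B <;> rfl) h

theorem imp_imp_neg_imp_neg (h : Proof (A.imp (B.imp C))) :
    Proof (A.imp ((neg C).imp (neg B))) :=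
  mp (taut fun v h0 hi _ => by
    simp only [neg, hi, h0]; cases v A <;> cases v B <;> cases v C <;> rfl) h

theorem and_imp_right : Proof ((A.and B).imp B) :=
  taut fun v _ hi ha => by simp only [hi, ha]; cases v A <;> cases v B <;> rfl

theorem box_imp_box (h : Proof (A.imp B)) : Proof ((box α A).imp (box α B)) :=
  mp k (nec h)

theorem dia_imp_dia (h : Proof (A.imp B)) : Proof ((dia α A).imp (dia α B)) :=
  neg_imp_neg (box_imp_box (neg_imp_neg h))

theorem dia_imp_dia_of_le (h : α ≤ β) : Proof ((dia β A).imp (dia α A)) :=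
  neg_imp_neg (mono h)

theorem box_imp_dia_imp_dia_and : Proof ((box α B).imp ((dia α A).imp (dia α (A.and B)))) := by
  have hB : Proof (B.imp ((neg (A.and B)).imp (neg A))) :=
    taut fun v h0 hi ha => by simp only [neg, hi, ha, h0]; cases v A <;> cases v B <;> rfl
  have hK : Proof ((box α B).imp ((box α (neg (A.and B))).imp (box α (neg A)))) :=
    imp_trans (box_imp_box hB) k
  -- `⟨α⟩C` unfolds to `¬[α]¬C`
  exact imp_imp_neg_imp_neg hK

theorem dia_imp_dia_and_of_imp_box (h : Proof ((dia α A).imp (box α B))) :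
    Proof ((dia α A).imp (dia α (A.and B))) :=
  imp_of_imp_imp (imp_trans h box_imp_dia_imp_dia_and)

theorem Q_imp_box (φ : GLPFormula) (n : ℕ) (h : α < β) :
    Proof ((Q α φ n).imp (box β (Q α φ n))) := by
  cases n <;> exact negIntro h

theorem dia_imp_Q (φ : GLPFormula) (h : α < β) : ∀ n, Proof ((dia β φ).imp (Q α φ n))
  | 0 => dia_imp_dia_of_le h.le
  | n + 1 =>
    have hBox : Proof ((dia β φ).imp (box β (Q α φ n))) :=
      imp_trans (dia_imp_Q φ h n) (Q_imp_box φ n h)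
    imp_trans (dia_imp_dia_and_of_imp_box hBox) (dia_imp_dia_of_le h.le)

end GLPFormula.Proof

/-- For every k and every GLP formula φ, GLP ⊢ ⟨α+1⟩φ → ⟨α⟩Q^k_α(φ). -/
theorem glp_diaSucc_imp_dia_Q (k : ℕ) (α : Ordinal) (φ : GLPFormula) :
    Proof ((dia (α + 1) φ).imp (dia α (Q α φ k))) :=
  Proof.imp_trans (Proof.dia_imp_Q φ (lt_add_one α) (k + 1)) (Proof.dia_imp_dia Proof.and_imp_right)
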